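/- arXiv:1106.2915 — 2 statements merged into one kernel-verified Lean document; each statement's English description precedes it below -/
import Mathlib

section
/- For λ ∈ Z_{s,n} and μ ∈ P^{(k)} with λ ⋠_k μ, the inner product ⟨V_{ι(λ)}(A), V̄_{φ^{(k)}(μ)}(A)⟩ vanishes for every (s+n−1)×sn matrix A. -/
open Finset

/-- The minor of `A` on the rows `I` and columns `J` (listed increasingly);
junk value `0` if `I` and `J` have different sizes. -/
def minor {R : Type*} [CommRing R] {N M : ℕ} (A : Matrix (Fin N) (Fin M) R)
    (I : Finset (Fin N)) (J : Finset (Fin M)) : R :=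
  if h : J.card = I.card then
    (A.submatrix (I.orderEmbOfFin rfl) (J.orderEmbOfFin h)).det
  else 0

/-- `ι(μ) = ⊔_i {(i−1)n+1, …, (i−1)n+μ_i} ⊆ [sn]` (here `0`-based). -/
def iotaSet (s n : ℕ) (μ : Fin s → ℕ) : Finset (Fin (s * n)) :=
  Finset.univ.filter fun x =>
    (x : ℕ) % n < if h : (x : ℕ) / n < s then μ ⟨(x : ℕ) / n, h⟩ else 0

/-- `φ^{(k)}(μ) = {(i−1)n + μ_i + 1 : i ≠ k} ⊆ [sn]` (here `0`-based). -/
def phiSet (s n : ℕ) (k : Fin s) (μ : Fin s → ℕ) : Finset (Fin (s * n)) :=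
  Finset.univ.filter fun x =>
    (x : ℕ) / n ≠ (k : ℕ) ∧
      ((x : ℕ) % n) = (if h : (x : ℕ) / n < s then μ ⟨(x : ℕ) / n, h⟩ else n)

/-- `ε(J,K)`: the sign of the permutation sorting the concatenation of `J` and
`K`, and `0` if `J ∩ K ≠ ∅`. -/
def eps {α : Type*} [LinearOrder α] (J K : Finset α) : ℤ :=
  if Disjoint J K then (-1) ^ ((J ×ˢ K).filter fun p => p.2 < p.1).card else 0

/-- The sign `(−1)^{|I| − n(n+1)/2}` (written with the same parity as
`|I| + n(n+1)/2`, where `|I|` is the sum of the (1-based) elements of `I`). -/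
def vSign {N : ℕ} (n : ℕ) (I : Finset (Fin N)) : ℤ :=
  (-1) ^ ((∑ i ∈ I, ((i : ℕ) + 1)) + n * (n + 1) / 2)

/-- The inner product `⟨V_J(A), V̄_K(A)⟩ = ∑_{I ∈ ([s+n−1] choose n)}
(det A^I_J) · (−1)^{|I|−n(n+1)/2} (det A^{Ī}_K)`. -/
noncomputable def innerVV {R : Type*} [CommRing R] {s n : ℕ}
    (A : Matrix (Fin (s + n - 1)) (Fin (s * n)) R)
    (J K : Finset (Fin (s * n))) : R :=
  ∑ I : {I : Finset (Fin (s + n - 1)) // I.card = n},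
    minor A I.1 J * (((vSign n I.1 : ℤ) : R) * minor A (I.1)ᶜ K)

/-!
The inner product is the Laplace expansion, along its first `n` columns, of the square
determinant whose columns are those of `A` indexed by `ι(λ)` (there are `n` of them)
followed by those indexed by `φ^{(k)}(μ)` (there are `s - 1`). The sign
`(−1)^{|I|−n(n+1)/2}` is the sign of the shuffle permutation listing `I` before its
complement: its inversions are the pairs `y < x` with `x ∈ I`, `y ∉ I`, and there are
`∑_{x ∈ I} x − n(n−1)/2` of them. If `λ_l > μ_l` for some `l ≠ k`, the column
`(l−1)n + μ_l + 1` lies in both `ι(λ)` and `φ^{(k)}(μ)`, so the determinant has two equal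
columns and vanishes.
-/

namespace Finset

lemma card_filter_lt_orderEmbOfFin {α : Type*} [LinearOrder α] (I : Finset α) {k : ℕ}
    (hI : I.card = k) (a : Fin k) : #{y ∈ I | y < I.orderEmbOfFin hI a} = a := by
  have hmap : {y ∈ I | y < I.orderEmbOfFin hI a} =
      (Iio a).map (I.orderEmbOfFin hI).toEmbedding := by
    ext y
    simp only [mem_filter, mem_map, mem_Iio, RelEmbedding.coe_toEmbedding]
    constructor
    · rintro ⟨hy, hlt⟩
      obtain ⟨a', rfl⟩ : y ∈ Set.range (I.orderEmbOfFin hI) := by rwa [range_orderEmbOfFin]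
      exact ⟨a', (I.orderEmbOfFin hI).lt_iff_lt.mp hlt, rfl⟩
    · rintro ⟨a', ha', rfl⟩
      exact ⟨I.orderEmbOfFin_mem hI a', (I.orderEmbOfFin hI).lt_iff_lt.mpr ha'⟩
  rw [hmap, card_map, Fin.card_Iio]

lemma card_compl_filter_lt_orderEmbOfFin_add {N k : ℕ} (I : Finset (Fin N)) (hI : I.card = k)
    (a : Fin k) : #{y ∈ Iᶜ | y < I.orderEmbOfFin hI a} + a = I.orderEmbOfFin hI a := by
  set x := I.orderEmbOfFin hI a
  have hsplit := card_filter_add_card_filter_not (s := Iio x) (· ∈ I)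
  have hin : Iio x ∩ I = {y ∈ I | y < x} := by ext; simp [and_comm]
  have hout : {y ∈ Iio x | y ∉ I} = {y ∈ Iᶜ | y < x} := by ext; simp [and_comm]
  rw [Fin.card_Iio, filter_mem_eq_inter, hin, card_filter_lt_orderEmbOfFin, hout] at hsplit
  omega

end Finset

theorem Equiv.Perm.sign_eq_neg_one_pow_card_of_strictMono {n m : ℕ}
    (σ : Equiv.Perm (Fin (n + m)))
    (hl : StrictMono (σ ∘ Fin.castAdd m)) (hr : StrictMono (σ ∘ Fin.natAdd n)) :
    σ.sign = (-1) ^ #{p : Fin n × Fin m | σ (Fin.natAdd n p.2) < σ (Fin.castAdd m p.1)} := by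
  have hll (a a' : Fin n) (h : Fin.castAdd m a < Fin.castAdd m a') :
      σ (Fin.castAdd m a) < σ (Fin.castAdd m a') :=
    hl ((Fin.strictMono_castAdd m).lt_iff_lt.mp h)
  have hrr (b b' : Fin m) (h : Fin.natAdd n b < Fin.natAdd n b') :
      σ (Fin.natAdd n b) < σ (Fin.natAdd n b') :=
    hr ((Fin.strictMono_natAdd n).lt_iff_lt.mp h)
  have hlr (a : Fin n) (b : Fin m) : Fin.castAdd m a < Fin.natAdd n b := by
    simp only [Fin.lt_def, Fin.val_castAdd, Fin.val_natAdd]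
    omega
  have hmix (a : Fin n) (b : Fin m) :
      (if σ (Fin.castAdd m a) < σ (Fin.natAdd n b) then (1 : ℤˣ) else -1) =
        if σ (Fin.natAdd n b) < σ (Fin.castAdd m a) then -1 else 1 := by
    rcases (σ.injective.ne (hlr a b).ne).lt_or_gt with h | h <;> simp [h, h.not_gt]
  rw [σ.sign_eq_prod_prod_Iio, ← prod_const, prod_filter, Fintype.prod_prod_type,
    Fin.prod_univ_add]
  simp +contextual only [← filter_gt_eq_Iio, prod_filter, Fin.prod_univ_add, hll, hrr, hlr,
    (hlr _ _).not_gt, if_true, if_false, ite_self, prod_const_one, mul_one, one_mul, hmix]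
  exact prod_comm

namespace Finset

variable {n m : ℕ}

lemma card_compl_of_card_eq {I : Finset (Fin (n + m))} (hI : I.card = n) : Iᶜ.card = m := by
  rw [card_compl, hI, Fintype.card_fin, Nat.add_sub_cancel_left]

noncomputable def shufflePerm (I : Finset (Fin (n + m))) (hI : I.card = n) :
    Equiv.Perm (Fin (n + m)) :=
  finSumFinEquiv.symm.trans <|
    (Equiv.sumCongr (I.orderIsoOfFin hI).toEquiv
      ((Iᶜ.orderIsoOfFin (card_compl_of_card_eq hI)).toEquiv.trans
        (Equiv.subtypeEquivRight fun _ => mem_compl))).trans (Equiv.sumCompl (· ∈ I))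

section ShufflePerm

variable {I : Finset (Fin (n + m))} (hI : I.card = n)

@[simp]
lemma shufflePerm_castAdd (a : Fin n) :
    shufflePerm I hI (Fin.castAdd m a) = I.orderEmbOfFin hI a := by
  simp [shufflePerm]

@[simp]
lemma shufflePerm_natAdd (b : Fin m) :
    shufflePerm I hI (Fin.natAdd n b) = Iᶜ.orderEmbOfFin (card_compl_of_card_eq hI) b := by
  simp [shufflePerm]

lemma card_inversions_shufflePerm_add_sum :
    #{p : Fin n × Fin m |
        shufflePerm I hI (Fin.natAdd n p.2) < shufflePerm I hI (Fin.castAdd m p.1)} +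
      ∑ a : Fin n, (a : ℕ) = ∑ i ∈ I, (i : ℕ) := by
  have hrow (a : Fin n) :
      #{b | Iᶜ.orderEmbOfFin (card_compl_of_card_eq hI) b < I.orderEmbOfFin hI a} =
        #{y ∈ Iᶜ | y < I.orderEmbOfFin hI a} := by
    have hmap := filter_map (f := (Iᶜ.orderEmbOfFin (card_compl_of_card_eq hI)).toEmbedding)
      (s := univ) (p := (· < I.orderEmbOfFin hI a))
    rw [map_orderEmbOfFin_univ] at hmap
    rw [hmap, card_map]
    rfl
  have hsum := sum_map univ (I.orderEmbOfFin hI).toEmbedding (fun i => (i : ℕ))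
  rw [map_orderEmbOfFin_univ] at hsum
  simp only [shufflePerm_castAdd, shufflePerm_natAdd]
  rw [card_filter, Fintype.sum_prod_type]
  simp only [← card_filter, hrow, ← sum_add_distrib, card_compl_filter_lt_orderEmbOfFin_add]
  exact hsum.symm

theorem sign_shufflePerm : (Equiv.Perm.sign (shufflePerm I hI) : ℤ) = vSign n I := by
  have hgauss : (∑ a : Fin n, (a : ℕ)) * 2 = n * (n - 1) := by
    rw [Fin.sum_univ_eq_sum_range (fun a => a), sum_range_id_mul_two]
  have hsq : n * (n + 1) = n * (n - 1) + 2 * n := by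
    rcases n with _ | n
    · rfl
    · rw [Nat.add_sub_cancel]; ring
  have hexp (D : ℕ) : D + ∑ a : Fin n, (a : ℕ) + n + n * (n + 1) / 2 =
      D + 2 * (∑ a : Fin n, (a : ℕ) + n) := by
    omega
  have hshift : ∑ i ∈ I, ((i : ℕ) + 1) = ∑ i ∈ I, (i : ℕ) + n := by
    rw [sum_add_distrib, sum_const, hI, smul_eq_mul, mul_one]
  rw [(shufflePerm I hI).sign_eq_neg_one_pow_card_of_strictMono
      (by simpa [Function.comp_def] using (I.orderEmbOfFin hI).strictMono)
      (by simpa [Function.comp_def] using (Iᶜ.orderEmbOfFin _).strictMono),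
    vSign, hshift, ← card_inversions_shufflePerm_add_sum hI, hexp, pow_add, pow_mul]
  simp

end ShufflePerm

noncomputable def shuffleSumCongr
    (z : {I : Finset (Fin (n + m)) // I.card = n} × Equiv.Perm (Fin n) × Equiv.Perm (Fin m)) :
    Equiv.Perm (Fin (n + m)) :=
  shufflePerm z.1.1 z.1.2 * finSumFinEquiv.permCongr (z.2.1.sumCongr z.2.2)

section ShuffleSumCongr

variable (z : {I : Finset (Fin (n + m)) // I.card = n} × Equiv.Perm (Fin n) × Equiv.Perm (Fin m))

@[simp]
lemma shuffleSumCongr_castAdd (a : Fin n) :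
    shuffleSumCongr z (Fin.castAdd m a) = z.1.1.orderEmbOfFin z.1.2 (z.2.1 a) := by
  simp [shuffleSumCongr]

@[simp]
lemma shuffleSumCongr_natAdd (b : Fin m) :
    shuffleSumCongr z (Fin.natAdd n b) =
      (z.1.1)ᶜ.orderEmbOfFin (card_compl_of_card_eq z.1.2) (z.2.2 b) := by
  simp [shuffleSumCongr]

lemma sign_shuffleSumCongr :
    Equiv.Perm.sign (shuffleSumCongr z) =
      Equiv.Perm.sign (shufflePerm z.1.1 z.1.2) *
        (Equiv.Perm.sign z.2.1 * Equiv.Perm.sign z.2.2) := by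
  rw [shuffleSumCongr, Equiv.Perm.sign_mul, Equiv.Perm.sign_permCongr, Equiv.Perm.sign_sumCongr]

lemma image_shuffleSumCongr_castAdd :
    univ.image (fun a => shuffleSumCongr z (Fin.castAdd m a)) = z.1.1 := by
  simp only [shuffleSumCongr_castAdd]
  rw [← Function.comp_def, ← image_image, image_univ_equiv, image_orderEmbOfFin_univ]

end ShuffleSumCongr

lemma shuffleSumCongr_injective : Function.Injective (shuffleSumCongr (n := n) (m := m)) := by
  rintro ⟨⟨I, hI⟩, g, h⟩ ⟨⟨I', hI'⟩, g', h'⟩ heq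
  obtain rfl : I = I' := by
    have himage := image_shuffleSumCongr_castAdd (⟨I, hI⟩, g, h)
    rwa [heq, image_shuffleSumCongr_castAdd, eq_comm] at himage
  have hg : g = g' := Equiv.ext fun a => (I.orderEmbOfFin hI).injective <| by
    simpa using congr($heq (Fin.castAdd m a))
  have hh : h = h' := Equiv.ext fun b =>
    (Iᶜ.orderEmbOfFin (card_compl_of_card_eq hI)).injective <| by
      simpa using congr($heq (Fin.natAdd n b))
  rw [hg, hh]

lemma shuffleSumCongr_bijective : Function.Bijective (shuffleSumCongr (n := n) (m := m)) := by
  refine (Fintype.bijective_iff_injective_and_card _).mpr ⟨shuffleSumCongr_injective, ?_⟩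
  simp only [Fintype.card_prod, Fintype.card_perm, Fintype.card_finset_len, Fintype.card_fin]
  rw [← mul_assoc, ← Nat.choose_mul_factorial_mul_factorial (Nat.le_add_right n m),
    Nat.add_sub_cancel_left]

end Finset

/-- Laplace expansion along the first `n` columns. -/
theorem Matrix.det_eq_sum_shufflePerm {n m : ℕ} {R : Type*} [CommRing R]
    (M : Matrix (Fin (n + m)) (Fin (n + m)) R) :
    M.det = ∑ I : {I : Finset (Fin (n + m)) // I.card = n},
      ((Equiv.Perm.sign (I.1.shufflePerm I.2) : ℤ) : R) *
        ((M.submatrix (I.1.orderEmbOfFin I.2) (Fin.castAdd m)).det *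
          (M.submatrix ((I.1)ᶜ.orderEmbOfFin (card_compl_of_card_eq I.2)) (Fin.natAdd n)).det) := by
  rw [M.det_apply', ← Fintype.sum_bijective _ shuffleSumCongr_bijective _ _ fun _ => rfl,
    Fintype.sum_prod_type]
  refine sum_congr rfl fun I _ => ?_
  rw [det_apply', det_apply', sum_mul_sum, mul_sum, Fintype.sum_prod_type]
  refine sum_congr rfl fun g _ => ?_
  rw [mul_sum]
  refine sum_congr rfl fun h _ => ?_
  simp only [Fin.prod_univ_add, sign_shuffleSumCongr, shuffleSumCongr_castAdd,
    shuffleSumCongr_natAdd, submatrix_apply, Units.val_mul, Int.cast_mul]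
  ring

section Minor

variable {R : Type*} [CommRing R]

lemma minor_eq_det {N M k : ℕ} (A : Matrix (Fin N) (Fin M) R)
    {I : Finset (Fin N)} {J : Finset (Fin M)} (hI : I.card = k) (hJ : J.card = k) :
    minor A I J = (A.submatrix (I.orderEmbOfFin hI) (J.orderEmbOfFin hJ)).det := by
  subst hI
  rw [minor, dif_pos hJ]

theorem sum_minor_mul_vSign_minor {n m M : ℕ} (A : Matrix (Fin (n + m)) (Fin M) R)
    {J K : Finset (Fin M)} (hJ : J.card = n) (hK : K.card = m) :
    ∑ I : {I : Finset (Fin (n + m)) // I.card = n},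
        minor A I.1 J * (((vSign n I.1 : ℤ) : R) * minor A (I.1)ᶜ K) =
      (A.submatrix id (Fin.append (J.orderEmbOfFin hJ) (K.orderEmbOfFin hK))).det := by
  rw [Matrix.det_eq_sum_shufflePerm]
  refine sum_congr rfl fun I _ => ?_
  rw [minor_eq_det A I.2 hJ, minor_eq_det A (card_compl_of_card_eq I.2) hK,
    ← sign_shufflePerm I.2, Matrix.submatrix_submatrix, Matrix.submatrix_submatrix]
  simp only [Function.comp_def, id_eq, Fin.append_left, Fin.append_right]
  ring

theorem sum_minor_mul_vSign_minor_eq_zero {N n m M : ℕ} (hN : N = n + m)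
    (A : Matrix (Fin N) (Fin M) R) {J K : Finset (Fin M)} (hJ : J.card = n) (hK : K.card = m)
    {c : Fin M} (hcJ : c ∈ J) (hcK : c ∈ K) :
    ∑ I : {I : Finset (Fin N) // I.card = n},
      minor A I.1 J * (((vSign n I.1 : ℤ) : R) * minor A (I.1)ᶜ K) = 0 := by
  subst hN
  rw [sum_minor_mul_vSign_minor A hJ hK]
  obtain ⟨a, rfl⟩ : c ∈ Set.range (J.orderEmbOfFin hJ) := by rwa [range_orderEmbOfFin]
  obtain ⟨b, hb⟩ : J.orderEmbOfFin hJ a ∈ Set.range (K.orderEmbOfFin hK) := by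
    rwa [range_orderEmbOfFin]
  refine Matrix.det_zero_of_column_eq (i := Fin.castAdd m a) (j := Fin.natAdd n b) ?_ fun r => ?_
  · simp only [ne_eq, Fin.ext_iff, Fin.val_castAdd, Fin.val_natAdd]
    omega
  · simp [hb]

end Minor

section IotaPhi

variable {s n : ℕ}

lemma mem_iotaSet {μ : Fin s → ℕ} {x : Fin (s * n)} :
    x ∈ iotaSet s n μ ↔ (x.modNat : ℕ) < μ x.divNat := by
  rw [iotaSet, mem_filter, dif_pos (show (x : ℕ) / n < s from x.divNat.is_lt)]
  exact and_iff_right (mem_univ x)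

lemma mem_phiSet {k : Fin s} {μ : Fin s → ℕ} {x : Fin (s * n)} :
    x ∈ phiSet s n k μ ↔ x.divNat ≠ k ∧ (x.modNat : ℕ) = μ x.divNat := by
  rw [Ne, Fin.ext_iff, phiSet, mem_filter, dif_pos (show (x : ℕ) / n < s from x.divNat.is_lt)]
  exact and_iff_right (mem_univ x)

lemma card_iotaSet {μ : Fin s → ℕ} (hμ : ∀ i, μ i ≤ n) : #(iotaSet s n μ) = ∑ i, μ i := by
  rw [card_equiv finProdFinEquiv.symm (t := {p : Fin s × Fin n | p.2 < μ p.1})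
    fun x => by simp [mem_iotaSet], card_filter, Fintype.sum_prod_type]
  simp only [← card_filter, Fin.card_filter_val_lt, min_eq_right (hμ _)]

lemma card_phiSet {k : Fin s} {μ : Fin s → ℕ} (hμ : ∀ i ≠ k, μ i < n) :
    #(phiSet s n k μ) = s - 1 := by
  rw [card_equiv finProdFinEquiv.symm (t := {p : Fin s × Fin n | p.1 ≠ k ∧ p.2 = μ p.1})
    fun x => by simp [mem_phiSet], show s - 1 = #(univ.erase k) by simp]
  refine card_nbij Prod.fst (fun p hp => by simpa using (mem_filter.mp hp).2.1) ?_ ?_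
  · rintro ⟨i, r⟩ hp ⟨i', r'⟩ hp' (rfl : i = i')
    simp only [coe_filter, mem_univ, true_and, Set.mem_ofPred_eq] at hp hp'
    simp [Fin.ext_iff, hp.2, hp'.2]
  · intro i hi
    have hik : i ≠ k := by simpa using hi
    exact ⟨(i, ⟨μ i, hμ i hik⟩), by simp [hik], rfl⟩

end IotaPhi

theorem inner_vanish_general (s n : ℕ)
    {R : Type*} [CommRing R] (A : Matrix (Fin (s + n - 1)) (Fin (s * n)) R)
    (k : Fin s) (lam μ : Fin s → ℕ)
    (hlam : (∑ i, lam i) = n) (hμ : (∑ i, μ i) = n) (hk : 0 < μ k)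
    (l : Fin s) (hl : l ≠ k) (hgt : μ l < lam l) :
    innerVV A (iotaSet s n lam) (phiSet s n k μ) = 0 := by
  have hlam_le (i : Fin s) : lam i ≤ n :=
    hlam ▸ single_le_sum (fun _ _ => Nat.zero_le _) (mem_univ i)
  have hμ_lt (i : Fin s) (hik : i ≠ k) : μ i < n := by
    have := sum_le_sum_of_subset (f := μ) (subset_univ {i, k})
    rw [sum_pair hik, hμ] at this
    omega
  set c := Fin.mkDivMod l ⟨μ l, hgt.trans_le (hlam_le l)⟩
  have hcJ : c ∈ iotaSet s n lam := by simpa [c, mem_iotaSet] using hgt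
  have hcK : c ∈ phiSet s n k μ := by simpa [c, mem_phiSet] using hl
  exact sum_minor_mul_vSign_minor_eq_zero (by have := k.pos; omega) A
    ((card_iotaSet hlam_le).trans hlam) (card_phiSet hμ_lt) hcJ hcK

/-- for `λ ∈ Z_{s,n}` and `μ ∈ P^{(k)}` with `λ ⋠_k μ`,
`⟨V_{ι(λ)}(A), V̄_{φ^{(k)}(μ)}(A)⟩ = 0` for every `(s+n−1)×sn` matrix `A`. -/
theorem inner_vanish (s n : ℕ) (hs : 0 < s) (hn : 0 < n)
    {R : Type*} [CommRing R] (A : Matrix (Fin (s + n - 1)) (Fin (s * n)) R)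
    (k : Fin s) (lam μ : Fin s → ℕ)
    (hlam : (∑ i, lam i) = n) (hμ : (∑ i, μ i) = n) (hk : 0 < μ k)
    (l : Fin s) (hl : l ≠ k) (hgt : μ l < lam l) :
    innerVV A (iotaSet s n lam) (phiSet s n k μ) = 0 :=
  inner_vanish_general s n A k lam μ hlam hμ hk l hl hgt
end

section
/- The leading term (in lex order x_1 ≫ ⋯ ≫ x_{sn}) of the determinant det(x_J^{s+n−I})_{I ∈ R, J ∈ C} is the product of its diagonal entries and equals ∏_{k=1}^{s} ∏_{j=1}^{n} x_{(k−1)n+j}^{(s+1−k)·binom(s+n−j, s)}, with leading coefficient 1. -/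
open Finset

/-- The set of "star positions" of `μ ∈ Z_{s,n}` in the stars-and-bars word:
this is the order isomorphism `Z_{s,n} ≅ ([s+n−1] choose n)` matching the
lexicographic orderings used for the rows and columns of `M(A)`. -/
def starPos (s n : ℕ) (μ : Fin s → ℕ) : Finset (Fin (s + n - 1)) :=
  Finset.univ.filter fun p => ∃ i : Fin s,
    (∑ l ∈ Finset.univ.filter (· < i), μ l) + (i : ℕ) ≤ (p : ℕ) ∧
      (p : ℕ) < (∑ l ∈ Finset.univ.filter (· ≤ i), μ l) + (i : ℕ)

/-- `Z_{s,n}`, the compositions of `n` into `s` nonnegative parts, as a type. -/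
abbrev Comp (s n : ℕ) := {μ : Fin s → ℕ // μ ∈ Finset.Nat.antidiagonalTuple s n}

/-- The matrix `M(A) = (det A^I_{ι(μ)})_{I,μ}`, with rows indexed through the
order isomorphism `starPos` (i.e. rows and columns in lexicographic order). -/
noncomputable def Mmat {R : Type*} [CommRing R] (s n : ℕ)
    (A : Matrix (Fin (s + n - 1)) (Fin (s * n)) R) :
    Matrix (Comp s n) (Comp s n) R :=
  Matrix.of fun ρ μ => minor A (starPos s n ρ.1) (iotaSet s n μ.1)

/-- The matrix `M̂(Φ,A) = ((−1)^{|I|−n(n+1)/2} det A^{Ī}_{Φ(μ)})_{I,μ}`, rows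
indexed through `starPos` as in `Mmat`. -/
noncomputable def Mhat {R : Type*} [CommRing R] (s n : ℕ)
    (A : Matrix (Fin (s + n - 1)) (Fin (s * n)) R)
    (Φ : (Fin s → ℕ) → Finset (Fin (s * n))) :
    Matrix (Comp s n) (Comp s n) R :=
  Matrix.of fun ρ μ =>
    ((vSign n (starPos s n ρ.1) : ℤ) : R) * minor A (starPos s n ρ.1)ᶜ (Φ μ.1)

/-- The exponent vector of the monomial `x_J^{s+n−I} = ∏_p x_{j_p}^{s+n−i_p}`
(with `I`, `J` listed increasingly; junk `0` if the sizes differ). -/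
noncomputable def Dvec (s n : ℕ) (I : Finset (Fin (s + n - 1)))
    (J : Finset (Fin (s * n))) : Fin (s * n) →₀ ℕ :=
  if h : J.card = I.card then
    ∑ p : Fin I.card,
      Finsupp.single (J.orderEmbOfFin h p) ((s + n - 1) - (I.orderEmbOfFin rfl p : ℕ))
  else 0

/-- `d` is lexicographically smaller than `D` for `x_1 ≫ x_2 ≫ ⋯`: at the first
index where they differ, `d` has the smaller exponent. -/
def lexLT {M : ℕ} (d D : Fin M →₀ ℕ) : Prop :=
  ∃ j : Fin M, (∀ i : Fin M, i < j → d i = D i) ∧ d j < D j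

/-- The element `(k−1)n + j` of `[sn]` (0-based: `k·n + j`). -/
def finIdx {s n : ℕ} (k : Fin s) (j : Fin n) : Fin (s * n) :=
  ⟨(k : ℕ) * n + (j : ℕ), by
    have h1 : (k : ℕ) * n + (j : ℕ) < ((k : ℕ) + 1) * n := by
      rw [Nat.succ_mul]; exact Nat.add_lt_add_left j.isLt _
    exact lt_of_lt_of_le h1 (Nat.mul_le_mul_right n k.isLt)⟩

/-- The exponent vector of `∏_{k=1}^s ∏_{j=1}^n x_{(k−1)n+j}^{(s+1−k)·C(s+n−j, s)}`. -/
noncomputable def Dstar (s n : ℕ) : Fin (s * n) →₀ ℕ :=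
  ∑ k : Fin s, ∑ j : Fin n,
    Finsupp.single (finIdx k j) ((s - (k : ℕ)) * (s + n - 1 - (j : ℕ)).choose s)

/-!
Expanding the determinant by Leibniz, the term of a permutation `σ` of `Z_{s,n}` is the monomial
whose exponent at the variable `x` of block `k` is the sum, over the columns `μ` with
`x ∈ ι(μ)`, of `s + n − 1` minus the position of the star of the row `σ μ` paired with `x`.
If `σ` does not change the parts before block `k`, that star lies in a block `≥ k`, so the
exponent is at most the diagonal one, with equality unless `σ` sends some `μ` with `x ∈ ι(μ)`
to a composition with `x ∉ ι(σ μ)`. At the first such variable the term of `σ ≠ 1` loses while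
agreeing on all earlier variables (a permutation cannot only enlarge part `k`), so the diagonal
term is the unique lex-largest one.

Its exponent at the `j`-th variable of block `k` is computed by lowering `μ_k` by `j + 1`: the
sum becomes `∑_{τ ∈ Z_{s,m}} ∑_{l ≥ k} (τ_l + 1)` with `m = n − 1 − j`, and by the symmetry of
the coordinates together with `|Z_{s,m}| = C(s + m − 1, m)` each inner coordinate sum is
`C(s + m, s)`.
-/

lemma Finsupp.sum_single_apply_of_injective {ι α M : Type*} [Fintype ι] [AddCommMonoid M]
    {g : ι → α} (hg : Function.Injective g) (a : ι → M) (i : ι) :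
    (∑ p, Finsupp.single (g p) (a p)) (g i) = a i := by
  rw [Finsupp.finsetSum_apply,
    Finset.sum_eq_single i (fun p _ hp => Finsupp.single_eq_of_ne (hg.ne hp).symm) (by simp),
    Finsupp.single_eq_same]

lemma Fin.card_filter_not_val_lt {s k : ℕ} (hk : k ≤ s) :
    (univ.filter fun l : Fin s => ¬ (l : ℕ) < k).card = s - k := by
  have := card_filter_add_card_filter_not (s := univ) (fun l : Fin s => (l : ℕ) < k)
  rw [Fin.card_filter_val_lt, card_univ, Fintype.card_fin, min_eq_right hk] at this
  omega

namespace Finset.Nat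

lemma card_antidiagonalTuple (s m : ℕ) :
    (antidiagonalTuple s m).card = (s + m - 1).choose m := by
  rw [← piAntidiag_univ_fin_eq_antidiagonalTuple, ← map_sym_eq_piAntidiag, card_map, sym_univ,
    card_univ, Sym.card_sym_fin_eq_multichoose, Nat.multichoose_eq]

variable {s : ℕ}

lemma sum_antidiagonalTuple_apply_comm {M : Type*} [AddCommMonoid M] (m : ℕ) (f : ℕ → M)
    (l l' : Fin s) :
    ∑ τ ∈ antidiagonalTuple s m, f (τ l) =
      ∑ τ ∈ antidiagonalTuple s m, f (τ l') :=
  sum_equiv ((Equiv.swap l l').arrowCongr (Equiv.refl ℕ))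
    (fun τ => by
      simp only [mem_antidiagonalTuple, Equiv.arrowCongr_apply, Equiv.coe_refl,
        Equiv.symm_swap, Function.comp_apply, id_eq, Equiv.sum_comp (Equiv.swap l l') τ])
    (fun τ _ => by simp)

lemma sum_antidiagonalTuple_apply_add_one (m : ℕ) (l : Fin s) :
    ∑ τ ∈ antidiagonalTuple s m, (τ l + 1) = (s + m).choose s := by
  obtain ⟨t, rfl⟩ : ∃ t, s = t + 1 := ⟨s - 1, by have := l.pos; omega⟩
  apply Nat.eq_of_mul_eq_mul_left l.pos
  calc (t + 1) * ∑ τ ∈ antidiagonalTuple (t + 1) m, (τ l + 1)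
      = ∑ l' : Fin (t + 1), ∑ τ ∈ antidiagonalTuple (t + 1) m, (τ l' + 1) := by
        simp only [sum_antidiagonalTuple_apply_comm m (· + 1) _ l, sum_const, card_univ,
          Fintype.card_fin, smul_eq_mul]
    _ = ∑ τ ∈ antidiagonalTuple (t + 1) m, (m + (t + 1)) := by
        rw [sum_comm]
        refine sum_congr rfl fun τ hτ => ?_
        rw [sum_add_distrib, mem_antidiagonalTuple.1 hτ, sum_const, card_univ,
          Fintype.card_fin, smul_eq_mul, mul_one]
    _ = (t + 1) * (t + 1 + m).choose (t + 1) := by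
        rw [sum_const, card_antidiagonalTuple, smul_eq_mul, show t + 1 + m - 1 = t + m by omega,
          ← Nat.choose_symm_add, show t + 1 + m = t + m + 1 by omega, mul_comm,
          show m + (t + 1) = t + m + 1 by omega, Nat.add_one_mul_choose_eq]
        ring

lemma antidiagonalTuple_filter_le_apply (m c : ℕ) (a : Fin s) :
    (antidiagonalTuple s (m + c)).filter (fun μ => c ≤ μ a) =
      (antidiagonalTuple s m).map (addRightEmbedding (Pi.single a c)) := by
  ext μ
  simp only [mem_filter, mem_map, mem_antidiagonalTuple, addRightEmbedding_apply]
  constructor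
  · rintro ⟨hsum, hc⟩
    have hμ : Function.update μ a (μ a - c) + Pi.single a c = μ := by
      funext l
      by_cases hl : l = a
      · subst hl; simp; omega
      · simp [hl]
    refine ⟨Function.update μ a (μ a - c), ?_, hμ⟩
    rw [← hμ] at hsum
    simp only [Pi.add_apply, sum_add_distrib, Fintype.sum_pi_single'] at hsum
    omega
  · rintro ⟨τ, hτ, rfl⟩
    simp [sum_add_distrib, hτ]

end Finset.Nat

open MvPolynomial in
lemma Matrix.det_of_monomial_one {ι σ R : Type*} [Fintype ι] [DecidableEq ι] [CommRing R]
    (D : ι → ι → σ →₀ ℕ) :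
    (Matrix.of fun i j => monomial (D i j) (1 : R)).det =
      ∑ e : Equiv.Perm ι, monomial (∑ j, D (e j) j) ((Equiv.Perm.sign e : ℤ) : R) := by
  rw [Matrix.det_apply]
  refine sum_congr rfl fun e _ => ?_
  simp [← monomial_sum_one, Units.smul_def, smul_monomial]

lemma lexLT_irrefl {M : ℕ} (d : Fin M →₀ ℕ) : ¬ lexLT d d :=
  fun ⟨_, _, h⟩ => lt_irrefl _ h

lemma MvPolynomial.coeff_sum_monomial_of_lexLT {ι R : Type*} [Fintype ι] [CommSemiring R] {M : ℕ}
    (E : ι → Fin M →₀ ℕ) (c : ι → R) {i₀ : ι} (h : ∀ i ≠ i₀, lexLT (E i) (E i₀)) :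
    coeff (E i₀) (∑ i, monomial (E i) (c i)) = c i₀ ∧
      ∀ d ∈ (∑ i, monomial (E i) (c i)).support, d ≠ E i₀ → lexLT d (E i₀) := by
  classical
  have hne (i : ι) (hi : i ≠ i₀) : E i ≠ E i₀ := fun he => lexLT_irrefl _ (he ▸ h i hi)
  refine ⟨?_, fun d hd hd₀ => ?_⟩
  · rw [coeff_sum, sum_eq_single i₀ (fun i _ hi => by rw [coeff_monomial, if_neg (hne i hi)])
      (by simp), coeff_monomial, if_pos rfl]
  · obtain ⟨i, -, hi⟩ := mem_biUnion.1 (support_sum hd)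
    obtain rfl := mem_singleton.1 (support_monomial_subset hi)
    exact h i fun hi₀ => hd₀ (hi₀ ▸ rfl)

namespace BigDet

section Blocks

variable {s : ℕ} (μ : Fin s → ℕ)

def part (l : ℕ) : ℕ := if h : l < s then μ ⟨l, h⟩ else 0

def partialSum (i : ℕ) : ℕ := ∑ l ∈ univ.filter (fun l : Fin s => (l : ℕ) < i), μ l

/-- The block containing the `p`-th star (`0`-based) of the stars-and-bars word of `μ`. -/
def block (p : ℕ) : ℕ := Nat.findGreatest (fun i => partialSum μ i ≤ p) s

lemma partialSum_zero : partialSum μ 0 = 0 := by simp [partialSum]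

lemma partialSum_mono : Monotone (partialSum μ) := fun _ _ h =>
  sum_le_sum_of_subset fun l => by simp only [mem_filter, mem_univ, true_and]; omega

lemma partialSum_of_le {i : ℕ} (hi : s ≤ i) : partialSum μ i = ∑ l, μ l := by
  rw [partialSum, filter_true_of_mem fun l _ => l.isLt.trans_le hi]

lemma partialSum_succ (i : ℕ) : partialSum μ (i + 1) = partialSum μ i + part μ i := by
  by_cases hi : i < s
  · have : univ.filter (fun l : Fin s => (l : ℕ) < i + 1)
        = insert ⟨i, hi⟩ (univ.filter fun l : Fin s => (l : ℕ) < i) := by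
      ext l; simp [Fin.ext_iff]; omega
    rw [partialSum, this, sum_insert (by simp), part, dif_pos hi, add_comm]; rfl
  · rw [partialSum_of_le μ (by omega), partialSum_of_le μ (by omega), part, dif_neg hi,
      add_zero]

lemma part_le_sum (l : ℕ) : part μ l ≤ ∑ i, μ i := by
  unfold part
  split_ifs
  · exact single_le_sum (fun i _ => Nat.zero_le _) (mem_univ _)
  · exact Nat.zero_le _

lemma partialSum_le_sum (i : ℕ) : partialSum μ i ≤ ∑ l, μ l :=
  sum_le_sum_of_subset (filter_subset _ _)

lemma partialSum_block_le (p : ℕ) : partialSum μ (block μ p) ≤ p :=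
  Nat.findGreatest_spec (P := fun i => partialSum μ i ≤ p) (Nat.zero_le s)
    (by rw [partialSum_zero]; exact Nat.zero_le p)

lemma le_block_iff {k p : ℕ} (hk : k ≤ s) : k ≤ block μ p ↔ partialSum μ k ≤ p :=
  ⟨fun h => (partialSum_mono μ h).trans (partialSum_block_le μ p),
    fun h => Nat.le_findGreatest hk h⟩

lemma block_mono : Monotone (block μ) := fun _ _ h =>
  Nat.findGreatest_mono (fun _ hi => hi.trans h) le_rfl

lemma lt_partialSum_block_succ {p : ℕ} (hp : p < ∑ l, μ l) :
    p < partialSum μ (block μ p + 1) := by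
  by_contra! h
  rcases le_or_gt (block μ p + 1) s with hs | hs
  · exact Nat.not_succ_le_self _ ((le_block_iff μ hs).2 h)
  · rw [partialSum_of_le μ hs.le] at h; omega

lemma block_lt {p : ℕ} (hp : p < ∑ l, μ l) : block μ p < s := by
  by_contra! h
  have := partialSum_block_le μ p
  rw [partialSum_of_le μ h] at this; omega

lemma block_eq {k p : ℕ} (hk : k ≤ s) (h₁ : partialSum μ k ≤ p)
    (h₂ : p < partialSum μ (k + 1)) : block μ p = k := by
  refine le_antisymm ?_ ((le_block_iff μ hk).2 h₁)
  by_contra! h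
  exact h₂.not_ge ((partialSum_mono μ h).trans (partialSum_block_le μ p))

lemma sub_partialSum_block_lt {p : ℕ} (hp : p < ∑ l, μ l) :
    p - partialSum μ (block μ p) < part μ (block μ p) := by
  have h₁ := partialSum_block_le μ p
  have h₂ := lt_partialSum_block_succ μ hp
  rw [partialSum_succ] at h₂; omega

end Blocks

section Enumerations

variable {s n : ℕ} (μ : Fin s → ℕ)

def starIdx (hμ : ∑ l, μ l = n) (p : Fin n) : Fin (s + n - 1) :=
  ⟨p + block μ p, by have := block_lt μ (p.isLt.trans_eq hμ.symm); omega⟩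

def colIdx (hμ : ∑ l, μ l = n) (p : Fin n) : Fin (s * n) :=
  ⟨block μ p * n + (p - partialSum μ (block μ p)), by
    have h₁ := block_lt μ (p.isLt.trans_eq hμ.symm)
    have h₂ := sub_partialSum_block_lt μ (p.isLt.trans_eq hμ.symm)
    have h₃ := (part_le_sum μ (block μ p)).trans_eq hμ
    calc _ < block μ p * n + n := by omega
      _ = (block μ p + 1) * n := by ring
      _ ≤ s * n := Nat.mul_le_mul_right n h₁⟩

lemma starIdx_strictMono (hμ : ∑ l, μ l = n) : StrictMono (starIdx μ hμ) :=
    fun p q (h : (p : ℕ) < q) => by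
  have := block_mono μ h.le
  simp only [starIdx, Fin.mk_lt_mk]
  omega

lemma colIdx_strictMono (hμ : ∑ l, μ l = n) : StrictMono (colIdx μ hμ) :=
    fun p q (h : (p : ℕ) < q) => by
  simp only [colIdx, Fin.mk_lt_mk]
  rcases (block_mono μ h.le).eq_or_lt with he | hlt
  · have := partialSum_block_le μ p
    rw [he] at this ⊢
    omega
  · have h₁ := sub_partialSum_block_lt μ (p.isLt.trans_eq hμ.symm)
    have h₂ := (part_le_sum μ (block μ p)).trans_eq hμ
    have h₃ : (block μ p + 1) * n ≤ block μ q * n := Nat.mul_le_mul_right n hlt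
    rw [add_mul, one_mul] at h₃
    omega

lemma colIdx_div_mod (hμ : ∑ l, μ l = n) (p : Fin n) :
    (colIdx μ hμ p : ℕ) / n = block μ p ∧
      (colIdx μ hμ p : ℕ) % n = p - partialSum μ (block μ p) := by
  have h₁ := sub_partialSum_block_lt μ (p.isLt.trans_eq hμ.symm)
  have h₂ := (part_le_sum μ (block μ p)).trans_eq hμ
  rw [Nat.div_mod_unique (by omega)]
  exact ⟨by simp only [colIdx]; ring, by omega⟩

lemma mem_iotaSet {x : Fin (s * n)} : x ∈ iotaSet s n μ ↔ (x : ℕ) % n < part μ (x / n) := by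
  simp [iotaSet, part]

lemma colIdx_mem (hμ : ∑ l, μ l = n) (p : Fin n) : colIdx μ hμ p ∈ iotaSet s n μ := by
  rw [mem_iotaSet, (colIdx_div_mod μ hμ p).1, (colIdx_div_mod μ hμ p).2]
  exact sub_partialSum_block_lt μ (p.isLt.trans_eq hμ.symm)

/-- The position of `x ∈ ι(μ)` in the increasing enumeration of `ι(μ)`. -/
def rank (x : Fin (s * n)) : ℕ := partialSum μ (x / n) + x % n

variable {μ} {x : Fin (s * n)}

lemma div_lt_of_mem_iotaSet (hx : x ∈ iotaSet s n μ) : (x : ℕ) / n < s := by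
  rw [mem_iotaSet, part] at hx
  split_ifs at hx with h
  · exact h
  · omega

lemma rank_lt (hμ : ∑ l, μ l = n) (hx : x ∈ iotaSet s n μ) : rank μ x < n := by
  rw [mem_iotaSet] at hx
  have := partialSum_succ μ (x / n)
  have := (partialSum_le_sum μ (x / n + 1)).trans_eq hμ
  unfold rank
  omega

lemma block_rank (hx : x ∈ iotaSet s n μ) : block μ (rank μ x) = x / n := by
  refine block_eq μ (div_lt_of_mem_iotaSet hx).le (Nat.le_add_right _ _) ?_
  rw [mem_iotaSet] at hx
  rw [partialSum_succ, rank]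
  omega

lemma colIdx_rank (hμ : ∑ l, μ l = n) (hx : x ∈ iotaSet s n μ) :
    colIdx μ hμ ⟨rank μ x, rank_lt hμ hx⟩ = x := by
  ext
  simp only [colIdx, block_rank hx]
  rw [rank, Nat.add_sub_cancel_left, mul_comm]
  exact Nat.div_add_mod _ _

variable (μ)

lemma iotaSet_eq_image (hμ : ∑ l, μ l = n) : iotaSet s n μ = univ.image (colIdx μ hμ) := by
  ext x
  simp only [mem_image, mem_univ, true_and]
  exact ⟨fun hx => ⟨_, colIdx_rank hμ hx⟩, by rintro ⟨p, rfl⟩; exact colIdx_mem μ hμ p⟩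

lemma mem_starPos {q : Fin (s + n - 1)} : q ∈ starPos s n μ ↔
    ∃ i : Fin s, partialSum μ i + i ≤ q ∧ (q : ℕ) < partialSum μ (i + 1) + i := by
  have h₁ (i : Fin s) : ∑ l ∈ univ.filter (· < i), μ l = partialSum μ i := by
    simp only [partialSum, Fin.lt_def]
  have h₂ (i : Fin s) : ∑ l ∈ univ.filter (· ≤ i), μ l = partialSum μ (i + 1) := by
    simp only [partialSum, Fin.le_def, Nat.lt_succ_iff]
  simp [starPos, h₁, h₂]

lemma starPos_eq_image (hμ : ∑ l, μ l = n) : starPos s n μ = univ.image (starIdx μ hμ) := by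
  ext q
  rw [mem_starPos]
  simp only [mem_image, mem_univ, true_and]
  constructor
  · rintro ⟨i, h₁, h₂⟩
    have := (partialSum_le_sum μ (i + 1)).trans_eq hμ
    have hb : block μ (q - i) = i := block_eq μ i.isLt.le (by omega) (by omega)
    exact ⟨⟨q - i, by omega⟩, Fin.ext (by simp only [starIdx, hb]; omega)⟩
  · rintro ⟨p, rfl⟩
    have h₁ := partialSum_block_le μ p
    have h₂ := lt_partialSum_block_succ μ (p.isLt.trans_eq hμ.symm)
    exact ⟨⟨block μ p, block_lt μ (p.isLt.trans_eq hμ.symm)⟩, by simp only [starIdx]; omega,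
      by simp only [starIdx]; omega⟩

end Enumerations

lemma Dvec_image {s n m : ℕ} {f : Fin m → Fin (s + n - 1)} {g : Fin m → Fin (s * n)}
    (hf : StrictMono f) (hg : StrictMono g) :
    Dvec s n (univ.image f) (univ.image g) = ∑ p, Finsupp.single (g p) (s + n - 1 - f p) := by
  have hcf : (univ.image f).card = m := by
    rw [card_image_of_injective _ hf.injective, card_univ, Fintype.card_fin]
  have hcg : (univ.image g).card = (univ.image f).card := by
    rw [hcf, card_image_of_injective _ hg.injective, card_univ, Fintype.card_fin]
  have ef := orderEmbOfFin_unique rfl (f := f ∘ Fin.cast hcf) (by simp)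
    (hf.comp (Fin.cast_strictMono hcf))
  have eg := orderEmbOfFin_unique hcg (f := g ∘ Fin.cast hcf) (by simp)
    (hg.comp (Fin.cast_strictMono hcf))
  rw [Dvec, dif_pos hcg, ← ef, ← eg]
  exact Fin.sum_congr' (fun p => Finsupp.single (g p) (s + n - 1 - f p)) hcf

section Exponents

variable {s n : ℕ}

lemma Dvec_starPos_iotaSet_apply {ρ μ : Fin s → ℕ} (hρ : ∑ l, ρ l = n) (hμ : ∑ l, μ l = n)
    (x : Fin (s * n)) :
    Dvec s n (starPos s n ρ) (iotaSet s n μ) x =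
      if x ∈ iotaSet s n μ then s + n - 1 - (rank μ x + block ρ (rank μ x)) else 0 := by
  rw [starPos_eq_image ρ hρ, iotaSet_eq_image μ hμ,
    Dvec_image (starIdx_strictMono ρ hρ) (colIdx_strictMono μ hμ), ← iotaSet_eq_image μ hμ]
  split_ifs with hx
  · conv_lhs => rw [← colIdx_rank hμ hx]
    rw [Finsupp.sum_single_apply_of_injective (colIdx_strictMono μ hμ).injective]
    rfl
  · rw [Finsupp.finsetSum_apply]
    exact sum_eq_zero fun p _ =>
      Finsupp.single_eq_of_ne fun h => hx (h ▸ colIdx_mem μ hμ p)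

variable {ρ μ : Fin s → ℕ} {x : Fin (s * n)}

lemma val_div_lt (x : Fin (s * n)) : (x : ℕ) / n < s :=
  Nat.div_lt_of_lt_mul (x.isLt.trans_eq (mul_comm s n))

lemma Dvec_apply_le_and_eq_iff (hρ : ∑ l, ρ l = n) (hμ : ∑ l, μ l = n)
    (h : partialSum ρ (x / n) = partialSum μ (x / n)) :
    Dvec s n (starPos s n ρ) (iotaSet s n μ) x ≤ Dvec s n (starPos s n μ) (iotaSet s n μ) x ∧
      (Dvec s n (starPos s n ρ) (iotaSet s n μ) x = Dvec s n (starPos s n μ) (iotaSet s n μ) x ↔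
        (x ∈ iotaSet s n μ → x ∈ iotaSet s n ρ)) := by
  rw [Dvec_starPos_iotaSet_apply hρ hμ, Dvec_starPos_iotaSet_apply hμ hμ]
  by_cases hx : x ∈ iotaSet s n μ
  · rw [if_pos hx, if_pos hx, block_rank hx, imp_iff_right hx]
    have hk := val_div_lt x
    have hr := rank_lt hμ hx
    have hb := block_lt ρ (hr.trans_eq hρ.symm)
    have hge : x / n ≤ block ρ (rank μ x) :=
      (le_block_iff ρ hk.le).2 (by rw [h]; exact Nat.le_add_right _ _)
    refine ⟨by omega, ⟨fun he => ?_, fun hxρ => ?_⟩⟩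
    · have hlt := lt_partialSum_block_succ ρ (hr.trans_eq hρ.symm)
      rw [show block ρ (rank μ x) = x / n by omega, partialSum_succ, h] at hlt
      rw [mem_iotaSet]
      unfold rank at hlt
      omega
    · have hrank : rank ρ x = rank μ x := by rw [rank, rank, h]
      rw [← hrank, block_rank hxρ]
  · simp [hx]

end Exponents

section Permutations

variable {s n : ℕ}

lemma comp_sum_eq (μ : Comp s n) : ∑ l, μ.1 l = n := Finset.Nat.mem_antidiagonalTuple.1 μ.2

/-- The exponent vector of the term of `σ` in the Leibniz expansion of the determinant. -/
noncomputable def termExp (σ : Equiv.Perm (Comp s n)) : Fin (s * n) →₀ ℕ :=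
  ∑ μ, Dvec s n (starPos s n (σ μ).1) (iotaSet s n μ.1)

def FixesPartsBelow (σ : Equiv.Perm (Comp s n)) (k : ℕ) : Prop :=
  ∀ μ (l : Fin s), (l : ℕ) < k → (σ μ).1 l = μ.1 l

def DropsAt (σ : Equiv.Perm (Comp s n)) (x : Fin (s * n)) : Prop :=
  ∃ μ : Comp s n, x ∈ iotaSet s n μ.1 ∧ x ∉ iotaSet s n (σ μ).1

variable {σ : Equiv.Perm (Comp s n)}

lemma FixesPartsBelow.mono {k k' : ℕ} (h : FixesPartsBelow σ k) (hk : k' ≤ k) :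
    FixesPartsBelow σ k' := fun μ l hl => h μ l (hl.trans_le hk)

lemma FixesPartsBelow.partialSum_eq {k : ℕ} (h : FixesPartsBelow σ k) (μ : Comp s n) :
    partialSum (σ μ).1 k = partialSum μ.1 k :=
  sum_congr rfl fun l hl => h μ l (mem_filter.1 hl).2

variable {x : Fin (s * n)}

lemma termExp_apply_le_and_eq_iff (hσ : FixesPartsBelow σ (x / n)) :
    termExp σ x ≤ termExp 1 x ∧ (termExp σ x = termExp 1 x ↔ ¬ DropsAt σ x) := by
  have key (μ : Comp s n) := Dvec_apply_le_and_eq_iff (x := x) (comp_sum_eq (σ μ))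
    (comp_sum_eq μ) (hσ.partialSum_eq μ)
  simp only [termExp, Finsupp.finsetSum_apply, Equiv.Perm.coe_one, id_eq]
  refine ⟨sum_le_sum fun μ _ => (key μ).1, ?_⟩
  rw [sum_eq_sum_iff_of_le fun μ _ => (key μ).1]
  simp only [mem_univ, true_implies, (key _).2, DropsAt, not_exists, not_and, not_not]

lemma finIdx_div_mod (k : Fin s) (j : Fin n) :
    ((finIdx k j : Fin (s * n)) : ℕ) / n = k ∧ ((finIdx k j : Fin (s * n)) : ℕ) % n = j := by
  rw [Nat.div_mod_unique j.pos]
  exact ⟨by simp only [finIdx]; ring, j.isLt⟩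

lemma finIdx_mem_iotaSet {μ : Fin s → ℕ} (k : Fin s) (j : Fin n) :
    finIdx k j ∈ iotaSet s n μ ↔ (j : ℕ) < μ k := by
  rw [mem_iotaSet, (finIdx_div_mod k j).1, (finIdx_div_mod k j).2, part, dif_pos k.isLt]

/-- Dropping no variable of block `k` makes every part `(σ μ)_k ≥ μ_k`; summing over the
permutation `σ` forces equality. -/
lemma FixesPartsBelow.succ {k : ℕ} (hk : k < s) (h : FixesPartsBelow σ k)
    (hd : ∀ x : Fin (s * n), (x : ℕ) / n = k → ¬ DropsAt σ x) : FixesPartsBelow σ (k + 1) := by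
  have hle (μ : Comp s n) : μ.1 ⟨k, hk⟩ ≤ (σ μ).1 ⟨k, hk⟩ := by
    by_contra! hlt
    have hn : (σ μ).1 ⟨k, hk⟩ < n :=
      hlt.trans_le ((single_le_sum (fun _ _ => Nat.zero_le _) (mem_univ _)).trans_eq
        (comp_sum_eq μ))
    refine hd (finIdx ⟨k, hk⟩ ⟨_, hn⟩) (finIdx_div_mod _ _).1 ⟨μ, ?_, ?_⟩
    · exact (finIdx_mem_iotaSet _ _).2 hlt
    · exact fun hmem => lt_irrefl _ ((finIdx_mem_iotaSet (μ := (σ μ).1) _ _).1 hmem)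
  have heq := (sum_eq_sum_iff_of_le fun μ _ => hle μ).1
    (Equiv.sum_comp σ fun μ => μ.1 ⟨k, hk⟩).symm
  intro μ l hl
  rcases (Nat.lt_succ_iff.1 hl).lt_or_eq with hl | hl
  · exact h μ l hl
  · obtain rfl : l = ⟨k, hk⟩ := Fin.ext hl
    exact (heq μ (mem_univ _)).symm

lemma fixesPartsBelow_of_not_dropsAt {k : ℕ} (hk : k ≤ s)
    (hd : ∀ x : Fin (s * n), (x : ℕ) / n < k → ¬ DropsAt σ x) : FixesPartsBelow σ k := by
  induction k with
  | zero => exact fun _ _ hl => absurd hl (Nat.not_lt_zero _)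
  | succ k ih =>
    exact (ih (by omega) fun x hx => hd x (by omega)).succ (by omega) fun x hx => hd x (by omega)

lemma eq_one_of_fixesPartsBelow (h : FixesPartsBelow σ s) : σ = 1 :=
  Equiv.ext fun μ => Subtype.ext (funext fun l => h μ l l.isLt)

theorem termExp_lexLT (hσ : σ ≠ 1) : lexLT (termExp σ) (termExp 1) := by
  have hex : {x | DropsAt σ x}.Nonempty := by
    by_contra! h
    exact hσ (eq_one_of_fixesPartsBelow (fixesPartsBelow_of_not_dropsAt le_rfl fun x _ hx =>
      h.subset hx))
  obtain ⟨x, hx, hmin⟩ := wellFounded_lt.has_min _ hex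
  have hfix : FixesPartsBelow σ (x / n) := fixesPartsBelow_of_not_dropsAt (val_div_lt x).le
    fun y hy hdy => hmin y hdy (Fin.lt_def.2 (Nat.lt_of_div_lt_div hy))
  refine ⟨x, fun y hy => ?_, ?_⟩
  · exact (termExp_apply_le_and_eq_iff (hfix.mono (Nat.div_le_div_right hy.le))).2.2
      fun hdy => hmin y hdy hy
  · obtain ⟨hle, hiff⟩ := termExp_apply_le_and_eq_iff hfix
    exact hle.lt_of_ne fun he => hiff.1 he hx

end Permutations

section Diagonal

variable {s n : ℕ}

lemma partialSum_add_single (τ : Fin s → ℕ) (a : Fin s) (c : ℕ) :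
    partialSum (τ + Pi.single a c) a = partialSum τ a :=
  sum_congr rfl fun l hl => by
    rw [Pi.add_apply, Pi.single_eq_of_ne (Fin.ne_of_lt (mem_filter.1 hl).2), add_zero]

lemma sum_filter_not_lt_add_partialSum (τ : Fin s → ℕ) {k : ℕ} (hk : k ≤ s) :
    ∑ l ∈ univ.filter (fun l : Fin s => ¬ (l : ℕ) < k), (τ l + 1) + (partialSum τ k + k) =
      ∑ l, τ l + s := by
  have := sum_filter_add_sum_filter_not univ (fun l : Fin s => (l : ℕ) < k) τ
  rw [sum_add_distrib, sum_const, Fin.card_filter_not_val_lt hk, smul_eq_mul, mul_one, partialSum]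
  omega

/-- The exponent of the `j`-th variable of block `a` in the product of the diagonal entries. -/
theorem sum_antidiagonalTuple_diag (a : Fin s) {n j : ℕ} (hj : j < n) :
    ∑ μ ∈ Finset.Nat.antidiagonalTuple s n,
        (if j < μ a then s + n - 1 - (partialSum μ a + j + a) else 0) =
      (s - a) * (s + n - 1 - j).choose s := by
  obtain ⟨m, rfl⟩ : ∃ m, n = m + (j + 1) := ⟨n - (j + 1), by omega⟩
  rw [← sum_filter]
  change ∑ μ ∈ (Finset.Nat.antidiagonalTuple s (m + (j + 1))).filter (fun μ => j + 1 ≤ μ a), _ = _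
  rw [Finset.Nat.antidiagonalTuple_filter_le_apply, sum_map]
  simp only [addRightEmbedding_apply, partialSum_add_single]
  calc ∑ τ ∈ Finset.Nat.antidiagonalTuple s m, (s + (m + (j + 1)) - 1 - (partialSum τ a + j + a))
      = ∑ τ ∈ Finset.Nat.antidiagonalTuple s m,
          ∑ l ∈ univ.filter (fun l : Fin s => ¬ (l : ℕ) < a), (τ l + 1) :=
        sum_congr rfl fun τ hτ => by
          have := sum_filter_not_lt_add_partialSum τ a.isLt.le
          rw [Finset.Nat.mem_antidiagonalTuple.1 hτ] at this
          omega
    _ = (s - a) * (s + (m + (j + 1)) - 1 - j).choose s := by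
        rw [sum_comm, sum_congr rfl fun l _ => Finset.Nat.sum_antidiagonalTuple_apply_add_one m l,
          sum_const, Fin.card_filter_not_val_lt a.isLt.le, smul_eq_mul,
          show s + (m + (j + 1)) - 1 - j = s + m by omega]

lemma finIdx_injective : Function.Injective fun p : Fin s × Fin n => finIdx p.1 p.2 :=
  fun p q h => by
    have hp := finIdx_div_mod p.1 p.2
    have hq := finIdx_div_mod q.1 q.2
    simp only at h
    rw [h] at hp
    exact Prod.ext (Fin.ext (hp.1.symm.trans hq.1)) (Fin.ext (hp.2.symm.trans hq.2))

lemma Dstar_apply (x : Fin (s * n)) :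
    Dstar s n x = (s - x / n) * (s + n - 1 - x % n).choose s := by
  have hx : x = finIdx x.divNat x.modNat := by
    ext
    simp only [finIdx, Fin.coe_divNat, Fin.coe_modNat]
    exact (Nat.div_add_mod' _ _).symm
  rw [Dstar, ← Fintype.sum_prod_type' (f := fun k j =>
    Finsupp.single (finIdx k j) ((s - (k : ℕ)) * (s + n - 1 - (j : ℕ)).choose s))]
  conv_lhs => rw [hx]
  exact Finsupp.sum_single_apply_of_injective finIdx_injective
    (fun p => (s - (p.1 : ℕ)) * (s + n - 1 - (p.2 : ℕ)).choose s) (x.divNat, x.modNat)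

theorem termExp_one : termExp (1 : Equiv.Perm (Comp s n)) = Dstar s n := by
  ext x
  set k : Fin s := ⟨x / n, val_div_lt x⟩
  have hn : 0 < n := Nat.pos_of_ne_zero fun h => by subst h; exact x.elim0
  have hmem (μ : Fin s → ℕ) : x ∈ iotaSet s n μ ↔ (x : ℕ) % n < μ k := by
    rw [mem_iotaSet, part, dif_pos k.isLt]
  have hsummand (μ : Comp s n) :
      Dvec s n (starPos s n μ.1) (iotaSet s n μ.1) x =
        if (x : ℕ) % n < μ.1 k then s + n - 1 - (partialSum μ.1 k + x % n + k) else 0 := by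
    rw [Dvec_starPos_iotaSet_apply (comp_sum_eq μ) (comp_sum_eq μ)]
    by_cases hx : x ∈ iotaSet s n μ.1
    · rw [if_pos hx, if_pos ((hmem _).1 hx), block_rank hx]
      rfl
    · rw [if_neg hx, if_neg (mt (hmem _).2 hx)]
  rw [Dstar_apply, termExp, Finsupp.finsetSum_apply]
  simp only [Equiv.Perm.coe_one, id_eq, hsummand]
  exact (sum_coe_sort _ _).trans (sum_antidiagonalTuple_diag k (Nat.mod_lt _ hn))

end Diagonal

end BigDet

theorem big_det_leading_general (s n : ℕ) :
    ∀ P : MvPolynomial (Fin (s * n)) ℚ,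
      P = Matrix.det (Matrix.of fun ρ μ : Comp s n =>
        MvPolynomial.monomial (Dvec s n (starPos s n ρ.1) (iotaSet s n μ.1)) (1 : ℚ)) →
      -- the product of the diagonal entries is the claimed monomial …
      (∑ μ ∈ Finset.Nat.antidiagonalTuple s n,
          Dvec s n (starPos s n μ) (iotaSet s n μ)) = Dstar s n ∧
      -- … and it is the lex leading term of the determinant, with coefficient 1
      MvPolynomial.coeff (Dstar s n) P = 1 ∧
      ∀ d ∈ P.support, d ≠ Dstar s n → lexLT d (Dstar s n) := by
  rintro P rfl
  have hdiag : ∑ μ ∈ Finset.Nat.antidiagonalTuple s n,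
      Dvec s n (starPos s n μ) (iotaSet s n μ) = Dstar s n := by
    rw [← BigDet.termExp_one, BigDet.termExp, ← sum_coe_sort]
    rfl
  rw [Matrix.det_of_monomial_one]
  obtain ⟨hcoeff, hsupp⟩ := MvPolynomial.coeff_sum_monomial_of_lexLT BigDet.termExp
    (fun σ => ((Equiv.Perm.sign σ : ℤ) : ℚ)) fun σ hσ => BigDet.termExp_lexLT (σ := σ) hσ
  rw [BigDet.termExp_one] at hcoeff hsupp
  exact ⟨hdiag, hcoeff.trans (by simp), hsupp⟩

/-- the lex (`x_1 ≫ ⋯ ≫ x_{sn}`) leading term of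
`det (x_J^{s+n−I})_{I ∈ R, J ∈ C}` is the product of its diagonal entries,
namely `∏_{k=1}^s ∏_{j=1}^n x_{(k−1)n+j}^{(s+1−k)·C(s+n−j,s)}`, with leading
coefficient `1`. -/
theorem big_det_leading (s n : ℕ) (hs : 0 < s) (hn : 0 < n) :
    ∀ P : MvPolynomial (Fin (s * n)) ℚ,
      P = Matrix.det (Matrix.of fun ρ μ : Comp s n =>
        MvPolynomial.monomial (Dvec s n (starPos s n ρ.1) (iotaSet s n μ.1)) (1 : ℚ)) →
      -- the product of the diagonal entries is the claimed monomial …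
      (∑ μ ∈ Finset.Nat.antidiagonalTuple s n,
          Dvec s n (starPos s n μ) (iotaSet s n μ)) = Dstar s n ∧
      -- … and it is the lex leading term of the determinant, with coefficient 1
      MvPolynomial.coeff (Dstar s n) P = 1 ∧
      ∀ d ∈ P.support, d ≠ Dstar s n → lexLT d (Dstar s n) :=
  big_det_leading_general s n
end
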